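/- For every n ≥ 1, the number of irreducible packed words of length n equals the number of packed trees of weight n, i.e. #{w ∈ PW_n : w irreducible} = #𝔗_n. -/

import Mathlib

/-- The maximum letter of a word (a list of natural numbers), with `wmax [] = 0`. -/
def wmax (w : List ℕ) : ℕ := w.foldr max 0

/-- A word over the positive integers is packed if every letter from `1` to its maximum
occurs in it. -/
def IsPacked (w : List ℕ) : Prop :=
  (∀ x ∈ w, 0 < x) ∧ ∀ i : ℕ, 0 < i → i ≤ wmax w → i ∈ w

/-- `c` is a global descent of `w` (positions are 1-based, `1 ≤ c ≤ |w| - 1`). -/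
def GlobalDescent (w : List ℕ) (c : ℕ) : Prop :=
  1 ≤ c ∧ c + 1 ≤ w.length ∧ ∀ a ∈ w.take c, ∀ b ∈ w.drop c, b < a

/-- A packed word is irreducible if it is nonempty and has no global descent. -/
def Irred (w : List ℕ) : Prop :=
  IsPacked w ∧ w ≠ [] ∧ ∀ c, ¬ GlobalDescent w c

/-- A labeled biplane tree: every node carries a label (a list of positive integers)
and an ordered pair of (possibly empty) ordered forests of children. -/
inductive LTree : Type where
  | node : List ℕ → List LTree → List LTree → LTree

instance : Inhabited LTree := ⟨.node [] [] []⟩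

mutual
  /-- The weight of a labeled biplane tree: the sum over all nodes of the lengths of
  their labels. -/
  def LTree.weight : LTree → ℕ
    | .node I fl fr => I.length + forestWeight fl + forestWeight fr
  /-- The weight of a forest: the sum of the weights of its trees. -/
  def forestWeight : List LTree → ℕ
    | [] => 0
    | t :: ts => t.weight + forestWeight ts
end

/-- The right-weight `ω_r(t) = p + ω(r_1) + ⋯ + ω(r_d)`. -/
def rightWeight : LTree → ℕ
  | .node I _ fr => I.length + forestWeight fr

/-- The left forest of a labeled biplane tree. -/
def leftForest : LTree → List LTree
  | .node _ fl _ => fl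

/-- Packed trees: the label `I = (i_1 < ⋯ < i_p)` is a nonempty strictly increasing list
of positive integers; if the right forest is empty then `I = (1, …, p)`; otherwise
`1 ≤ i_1 ≤ ω(r_1)` and `1 ≤ ω_r(t) + 1 − i_p ≤ ω(r_d)`; and all subtrees are packed. -/
inductive IsPT : LTree → Prop where
  | mk (I : List ℕ) (fl fr : List LTree) :
      I ≠ [] → I.Pairwise (· < ·) → (∀ i ∈ I, 0 < i) →
      (fr = [] → I = List.range' 1 I.length) →
      (fr ≠ [] →
        (1 ≤ I.headI ∧ I.headI ≤ fr.headI.weight ∧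
         1 ≤ rightWeight (.node I fl fr) + 1 - I.getLastI ∧
         rightWeight (.node I fl fr) + 1 - I.getLastI ≤ fr.getLastI.weight)) →
      (∀ t ∈ fl, IsPT t) → (∀ t ∈ fr, IsPT t) →
      IsPT (.node I fl fr)

/-!
Packed words are exactly the skew sums `a₁ ⊖ ⋯ ⊖ aₖ` of irreducible packed words, and the
decomposition is unique (its cuts are the global descents), so packed words correspond to forests
as soon as irreducible words correspond to trees. An irreducible word `w` with maximum `m` is
determined by the packed word `W` obtained by deleting its letters `m` (a forest, by induction)
together with the gaps between the deleted letters. The first gap splits the forest into the left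
and the right forest of a node, and the positions of `m` within the right part form the label.
The packed-tree conditions on the label say exactly that the first `m` comes before the end of
the word of the first right tree, which makes the split unique, and that the last `m` comes after
the first letter of the word of the last tree, which is what makes `w` irreducible.
-/

theorem wmax_nil : wmax [] = 0 := rfl

theorem wmax_le_iff {w : List ℕ} {k : ℕ} : wmax w ≤ k ↔ ∀ x ∈ w, x ≤ k :=
  ⟨fun h _ hx => (List.le_max_of_le hx le_rfl).trans h, List.max_le_of_forall_le w k⟩

theorem le_wmax {w : List ℕ} {x : ℕ} (h : x ∈ w) : x ≤ wmax w :=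
  wmax_le_iff.mp le_rfl x h

theorem wmax_mem {w : List ℕ} (h : w ≠ []) : wmax w ∈ w :=
  List.maximum_mem (List.foldr_max_of_ne_nil h).symm

theorem wmax_append (a b : List ℕ) : wmax (a ++ b) = max (wmax a) (wmax b) := by
  refine le_antisymm (wmax_le_iff.mpr fun x hx => ?_) (max_le ?_ ?_)
  · rcases List.mem_append.mp hx with hx | hx
    exacts [le_max_of_le_left (le_wmax hx), le_max_of_le_right (le_wmax hx)]
  · exact wmax_le_iff.mpr fun x hx => le_wmax (List.mem_append_left _ hx)
  · exact wmax_le_iff.mpr fun x hx => le_wmax (List.mem_append_right _ hx)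

theorem wmax_map_add {w : List ℕ} (h : w ≠ []) (k : ℕ) :
    wmax (w.map (· + k)) = wmax w + k := by
  refine le_antisymm (wmax_le_iff.mpr ?_) (le_wmax (List.mem_map_of_mem (wmax_mem h)))
  simp only [List.mem_map, forall_exists_index, and_imp, forall_apply_eq_imp_iff₂]
  exact fun x hx => Nat.add_le_add_right (le_wmax hx) k

/-! ### Skew sums and global descents -/

/-- The skew sum `a ⊖ b`. -/
def skew (a b : List ℕ) : List ℕ := a.map (· + wmax b) ++ b

theorem skew_nil_left (b : List ℕ) : skew [] b = b := rfl

theorem skew_nil_right (a : List ℕ) : skew a [] = a := by simp [skew, wmax_nil]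

theorem length_skew (a b : List ℕ) : (skew a b).length = a.length + b.length := by
  simp [skew]

theorem wmax_skew (a b : List ℕ) : wmax (skew a b) = wmax a + wmax b := by
  rcases eq_or_ne a [] with rfl | ha
  · simp [skew, wmax_nil]
  · rw [skew, wmax_append, wmax_map_add ha]
    omega

theorem skew_assoc (a b c : List ℕ) : skew (skew a b) c = skew a (skew b c) := by
  conv_rhs => rw [skew, wmax_skew]
  simp only [skew, List.map_append, List.map_map, List.append_assoc]
  congr 2
  funext x
  simp only [Function.comp_apply]
  omega

theorem lt_of_mem_skew {a b : List ℕ} (ha : ∀ x ∈ a, 0 < x) :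
    ∀ x ∈ a.map (· + wmax b), ∀ y ∈ b, y < x := by
  simp only [List.mem_map, forall_exists_index, and_imp, forall_apply_eq_imp_iff₂]
  exact fun x hx y hy => by have := ha x hx; have := le_wmax hy; omega

theorem isPacked_nil : IsPacked [] := by
  simp only [IsPacked, List.not_mem_nil, wmax_nil]
  exact ⟨fun _ h => h.elim, fun i hi h => by omega⟩

theorem isPacked_skew {a b : List ℕ} (ha : IsPacked a) (hb : IsPacked b) :
    IsPacked (skew a b) := by
  refine ⟨fun x hx => ?_, fun i hi hle => ?_⟩
  · rcases List.mem_append.mp hx with hx | hx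
    · obtain ⟨y, hy, rfl⟩ := List.mem_map.mp hx
      exact Nat.add_pos_left (ha.1 y hy) _
    · exact hb.1 x hx
  · rw [wmax_skew] at hle
    rcases le_or_gt i (wmax b) with hib | hib
    · exact List.mem_append_right _ (hb.2 i hi hib)
    · refine List.mem_append_left _ (List.mem_map.mpr ⟨i - wmax b, ha.2 _ ?_ ?_, ?_⟩) <;> omega

theorem IsPacked.of_skew {a b : List ℕ} (h : IsPacked (skew a b)) (ha : ∀ x ∈ a, 0 < x) :
    IsPacked a ∧ IsPacked b := by
  have hlt := lt_of_mem_skew (b := b) ha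
  refine ⟨⟨ha, fun i hi hle => ?_⟩, ⟨fun x hx => h.1 x (List.mem_append_right _ hx),
    fun i hi hle => ?_⟩⟩
  · have hmem := h.2 (i + wmax b) (by omega) (by rw [wmax_skew]; omega)
    rcases List.mem_append.mp hmem with hmem | hmem
    · obtain ⟨y, hy, hyi⟩ := List.mem_map.mp hmem
      rwa [show i = y by omega]
    · exact absurd (le_wmax hmem) (by omega)
  · have hmem := h.2 i hi (by rw [wmax_skew]; omega)
    rcases List.mem_append.mp hmem with hmem | hmem
    · obtain ⟨y, hy, rfl⟩ := List.mem_map.mp hmem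
      exact absurd hle (by have := ha y hy; omega)
    · exact hmem

theorem globalDescent_map_add_iff {w : List ℕ} {c k : ℕ} :
    GlobalDescent (w.map (· + k)) c ↔ GlobalDescent w c := by
  simp [GlobalDescent, ← List.map_take, ← List.map_drop]

theorem GlobalDescent.of_append_left {P S : List ℕ} {c : ℕ} (h : GlobalDescent (P ++ S) c)
    (hc : c < P.length) : GlobalDescent P c := by
  obtain ⟨hc1, -, hd⟩ := h
  refine ⟨hc1, hc, fun a ha b hb => hd a ?_ b ?_⟩
  · rwa [List.take_append_of_le_length hc.le]
  · rw [List.drop_append_of_le_length hc.le]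
    exact List.mem_append_left _ hb

theorem GlobalDescent.of_append_right {P S : List ℕ} {c : ℕ} (h : GlobalDescent (P ++ S) c)
    (hc : P.length < c) : GlobalDescent S (c - P.length) := by
  obtain ⟨-, hc2, hd⟩ := h
  rw [List.length_append] at hc2
  refine ⟨by omega, by omega, fun a ha b hb => hd a ?_ b ?_⟩
  · rw [List.take_append]
    exact List.mem_append_right _ ha
  · rwa [List.drop_append, List.drop_eq_nil_of_le (by omega), List.nil_append]

theorem GlobalDescent.append_of_lt {P S : List ℕ} {c : ℕ} (h : GlobalDescent P c)
    (hPS : ∀ x ∈ P, ∀ y ∈ S, y < x) : GlobalDescent (P ++ S) c := by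
  obtain ⟨hc1, hc2, hd⟩ := h
  refine ⟨hc1, by simp only [List.length_append]; omega, fun a ha b hb => ?_⟩
  rw [List.take_append_of_le_length (by omega)] at ha
  rw [List.drop_append_of_le_length (by omega)] at hb
  rcases List.mem_append.mp hb with hb | hb
  · exact hd a ha b hb
  · exact hPS a (List.mem_of_mem_take ha) b hb

theorem globalDescent_append_length {P S : List ℕ} (hP : P ≠ []) (hS : S ≠ [])
    (hPS : ∀ x ∈ P, ∀ y ∈ S, y < x) : GlobalDescent (P ++ S) P.length := by
  refine ⟨List.length_pos_iff.mpr hP, by simpa [Nat.one_le_iff_ne_zero] using hS, ?_⟩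
  simpa using hPS

theorem globalDescent_skew {a b : List ℕ} (ha : ∀ x ∈ a, 0 < x) (hane : a ≠ [])
    (hb : b ≠ []) :
    GlobalDescent (skew a b) a.length := by
  simpa [skew] using globalDescent_append_length (by simpa using hane) hb (lt_of_mem_skew ha)

theorem Irred.length_le_of_skew_eq {a b a' b' : List ℕ} (ha : Irred a) (ha' : Irred a')
    (h : skew a b = skew a' b') : a.length ≤ a'.length := by
  by_contra! hlt
  have hb' : b' ≠ [] := by
    rintro rfl
    have := congrArg List.length h
    simp only [length_skew, List.length_nil] at this
    omega
  have hd := globalDescent_skew ha'.1.1 ha'.2.1 hb'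
  rw [← h, skew] at hd
  exact ha.2.2 _ (globalDescent_map_add_iff.mp (hd.of_append_left (by simpa using hlt)))

theorem skew_inj {a b a' b' : List ℕ} (ha : Irred a) (ha' : Irred a')
    (h : skew a b = skew a' b') : a = a' ∧ b = b' := by
  have hlen := le_antisymm (ha.length_le_of_skew_eq ha' h) (ha'.length_le_of_skew_eq ha h.symm)
  obtain ⟨hmap, rfl⟩ := List.append_inj h (by simpa using hlen)
  exact ⟨List.map_injective_iff.mpr (add_left_injective _) hmap, rfl⟩

theorem skew_take_drop_of_lt {x : List ℕ} {c : ℕ}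
    (hd : ∀ a ∈ x.take c, ∀ b ∈ x.drop c, b < a) :
    skew ((x.take c).map (· - wmax (x.drop c))) (x.drop c) = x := by
  conv_rhs => rw [← List.take_append_drop c x]
  rw [skew, List.map_map]
  congr 1
  refine (List.map_congr_left fun a ha => ?_).trans (List.map_id _)
  have := wmax_le_iff.mpr fun b hb => (hd a ha b hb).le
  simp only [Function.comp_apply, id]
  omega

theorem IsPacked.exists_irred_skew {x : List ℕ} (hx : IsPacked x) (hne : x ≠ []) :
    ∃ a b, Irred a ∧ IsPacked b ∧ skew a b = x := by
  classical
  by_cases hgd : ∃ c, GlobalDescent x c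
  swap
  · exact ⟨x, [], ⟨hx, hne, fun c hc => hgd ⟨c, hc⟩⟩, isPacked_nil, skew_nil_right x⟩
  obtain ⟨hc1, hc2, hd⟩ := Nat.find_spec hgd
  set c := Nat.find hgd
  set b := x.drop c
  set a := (x.take c).map (· - wmax b)
  have hbne : b ≠ [] := List.ne_nil_of_length_pos (by simp only [b, List.length_drop]; omega)
  have hskew : skew a b = x := skew_take_drop_of_lt hd
  have hapos : ∀ y ∈ a, 0 < y := by
    simp only [a, List.mem_map, forall_exists_index, and_imp, forall_apply_eq_imp_iff₂]
    exact fun y hy => Nat.sub_pos_of_lt (hd y hy _ (wmax_mem hbne))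
  obtain ⟨hapack, hbpack⟩ := (hskew ▸ hx : IsPacked (skew a b)).of_skew hapos
  have hlen : a.length = c := by simp only [a, List.length_map, List.length_take]; omega
  refine ⟨a, b, ⟨hapack, List.ne_nil_of_length_pos (by omega), fun c' hc' => ?_⟩, hbpack,
    hskew⟩
  -- a global descent of `a` would be an earlier one of `x`
  have hxc' : GlobalDescent x c' := by
    rw [← hskew, skew]
    exact (globalDescent_map_add_iff.mpr hc').append_of_lt (lt_of_mem_skew hapos)
  exact absurd (Nat.find_min' hgd hxc') (by have := hc'.2.1; omega)

/-! ### Inserting a letter with prescribed gaps -/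

def place (m : ℕ) : List ℕ → List ℕ → List ℕ
  | [], v => v
  | g :: G, v => v.take g ++ m :: place m G (v.drop g)

theorem length_place (m : ℕ) (G v : List ℕ) : (place m G v).length = G.length + v.length := by
  induction G generalizing v with
  | nil => simp [place]
  | cons g G ih =>
    simp only [place, List.length_append, List.length_take, List.length_cons, ih,
      List.length_drop]
    omega

theorem mem_place {m x : ℕ} {G v : List ℕ} :
    x ∈ place m G v ↔ x ∈ v ∨ (G ≠ [] ∧ x = m) := by
  induction G generalizing v with
  | nil => simp [place]
  | cons g G ih =>
    conv_rhs => rw [← List.take_append_drop g v]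
    simp only [place, List.mem_append, List.mem_cons, ih]
    tauto

theorem wmax_place {m : ℕ} {G v : List ℕ} (hG : G ≠ []) (hv : ∀ x ∈ v, x ≤ m) :
    wmax (place m G v) = m := by
  refine le_antisymm (wmax_le_iff.mpr fun x hx => ?_) (le_wmax (mem_place.mpr (.inr ⟨hG, rfl⟩)))
  rcases mem_place.mp hx with hx | ⟨-, rfl⟩
  exacts [hv x hx, le_rfl]

theorem wmax_place_wmax_succ {G : List ℕ} (hG : G ≠ []) (v : List ℕ) :
    wmax (place (wmax v + 1) G v) = wmax v + 1 :=
  wmax_place hG fun _ hx => (le_wmax hx).trans (Nat.le_succ _)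

theorem place_append_of_sum_le (m : ℕ) {G a : List ℕ} (h : G.sum ≤ a.length) (b : List ℕ) :
    place m G (a ++ b) = place m G a ++ b := by
  induction G generalizing a with
  | nil => rfl
  | cons g G ih =>
    simp only [List.sum_cons] at h
    simp only [place, List.take_append_of_le_length (show g ≤ a.length by omega),
      List.drop_append_of_le_length (show g ≤ a.length by omega), List.append_assoc,
      List.cons_append, ih (show G.sum ≤ (a.drop g).length by rw [List.length_drop]; omega)]

theorem mem_drop_place (m : ℕ) {G v : List ℕ} {c : ℕ} (hs : G.sum ≤ v.length)
    (hc : c < G.length + G.sum) : m ∈ (place m G v).drop c := by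
  induction G generalizing v c with
  | nil => simp at hc
  | cons g G ih =>
    simp only [List.sum_cons, List.length_cons] at hs hc
    rw [place, List.drop_append, List.length_take_of_le (by omega)]
    refine List.mem_append_right _ ?_
    rcases le_or_gt c g with hcg | hcg
    · rw [Nat.sub_eq_zero_of_le hcg]
      exact List.mem_cons_self
    · rw [show c - g = c - g - 1 + 1 by omega, List.drop_succ_cons]
      exact ih (by rw [List.length_drop]; omega) (by omega)

/-- The gaps between the occurrences of `m` in `w`, counted in letters different from `m`. -/
def mgaps (m : ℕ) : List ℕ → List ℕ
  | [] => []
  | x :: w => if x = m then 0 :: mgaps m w else (mgaps m w).modifyHead (· + 1)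

theorem place_mgaps (m : ℕ) (w : List ℕ) : place m (mgaps m w) (w.filter (· ≠ m)) = w := by
  induction w with
  | nil => rfl
  | cons x w ih =>
    by_cases hx : x = m
    · subst hx
      rw [mgaps, if_pos rfl, List.filter_cons_of_neg (by simp), place, List.take_zero,
        List.drop_zero, ih, List.nil_append]
    · rw [mgaps, if_neg hx, List.filter_cons_of_pos (by simpa using hx)]
      rcases h : mgaps m w with _ | ⟨g, G⟩
      · rw [h] at ih
        simpa [place] using ih
      · rw [h] at ih
        simpa [place] using ih

theorem sum_mgaps_le (m : ℕ) (w : List ℕ) :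
    (mgaps m w).sum ≤ (w.filter (· ≠ m)).length := by
  induction w with
  | nil => simp [mgaps]
  | cons x w ih =>
    by_cases hx : x = m
    · subst hx
      simpa [mgaps] using ih
    · rw [mgaps, if_neg hx, List.filter_cons_of_pos (by simpa using hx)]
      rcases h : mgaps m w with _ | ⟨g, G⟩
      · simp
      · rw [h] at ih
        simp only [List.modifyHead_cons, List.sum_cons, List.length_cons] at ih ⊢
        omega

theorem mgaps_append_of_not_mem {m : ℕ} {a : List ℕ} (ha : m ∉ a) (w : List ℕ) :
    mgaps m (a ++ w) = (mgaps m w).modifyHead (· + a.length) := by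
  induction a with
  | nil => rw [List.nil_append]; cases mgaps m w <;> rfl
  | cons x a ih =>
    simp only [List.mem_cons, not_or] at ha
    rw [List.cons_append, mgaps, if_neg (Ne.symm ha.1), ih ha.2, List.modifyHead_modifyHead]
    rfl

theorem mgaps_place {m : ℕ} {G v : List ℕ} (hm : m ∉ v) (hs : G.sum ≤ v.length) :
    mgaps m (place m G v) = G := by
  induction G generalizing v with
  | nil =>
    have h := mgaps_append_of_not_mem hm []
    rw [List.append_nil] at h
    exact h
  | cons g G ih =>
    simp only [List.sum_cons] at hs
    rw [place, mgaps_append_of_not_mem (fun h => hm (List.mem_of_mem_take h)), mgaps, if_pos rfl,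
      ih (fun h => hm (List.mem_of_mem_drop h)) (by rw [List.length_drop]; omega)]
    rw [List.modifyHead_cons, zero_add, List.length_take_of_le (by omega)]

theorem filter_place {m : ℕ} {G v : List ℕ} (hm : m ∉ v) :
    (place m G v).filter (· ≠ m) = v := by
  induction G generalizing v with
  | nil => exact List.filter_eq_self.mpr fun x hx => by simpa using ne_of_mem_of_not_mem hx hm
  | cons g G ih =>
    rw [place, List.filter_append, List.filter_cons_of_neg (by simp),
      ih fun h => hm (List.mem_of_mem_drop h),
      List.filter_eq_self.mpr fun x hx => by
        simpa using ne_of_mem_of_not_mem (List.mem_of_mem_take hx) hm,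
      List.take_append_drop]

theorem place_inj {m : ℕ} {G G' v v' : List ℕ} (hm : m ∉ v) (hm' : m ∉ v')
    (hs : G.sum ≤ v.length) (hs' : G'.sum ≤ v'.length) (h : place m G v = place m G' v') :
    G = G' ∧ v = v' :=
  ⟨by rw [← mgaps_place hm hs, h, mgaps_place hm' hs'],
    by rw [← filter_place (G := G) hm, h, filter_place hm']⟩

theorem GlobalDescent.length_add_sum_le_of_place {m c : ℕ} {G v : List ℕ}
    (h : GlobalDescent (place m G v) c) (hv : ∀ x ∈ v, x ≤ m) (hs : G.sum ≤ v.length) :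
    G.length + G.sum ≤ c := by
  by_contra! hc
  obtain ⟨hc1, -, hd⟩ := h
  have hne : (place m G v).take c ≠ [] :=
    List.ne_nil_of_length_pos (by simp only [List.length_take, length_place]; omega)
  obtain ⟨a, ha⟩ := List.exists_mem_of_ne_nil _ hne
  have hlt := hd a ha m (mem_drop_place m hs hc)
  rcases mem_place.mp (List.mem_of_mem_take ha) with ha' | ⟨-, rfl⟩
  · exact absurd (hv a ha') (by omega)
  · exact lt_irrefl _ hlt

theorem GlobalDescent.of_place {m c : ℕ} {G v : List ℕ} (h : GlobalDescent (place m G v) c)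
    (hs : G.sum ≤ v.length) (hc : G.length + G.sum ≤ c) (hc' : G.length < c) :
    GlobalDescent v (c - G.length) := by
  obtain ⟨-, hc2, hd⟩ := h
  rw [length_place] at hc2
  have hsplit := place_append_of_sum_le m
    (show G.sum ≤ (v.take (c - G.length)).length by rw [List.length_take]; omega)
    (v.drop (c - G.length))
  rw [List.take_append_drop] at hsplit
  have hlen : (place m G (v.take (c - G.length))).length = c := by
    rw [length_place, List.length_take]
    omega
  refine ⟨by omega, by omega, fun a ha b hb => hd a ?_ b ?_⟩
  · rw [hsplit, List.take_left' hlen]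
    exact mem_place.mpr (.inl ha)
  · rwa [hsplit, List.drop_left' hlen]

theorem IsPacked.place_wmax_succ {G v : List ℕ} (hv : IsPacked v) (hG : G ≠ []) :
    IsPacked (place (wmax v + 1) G v) := by
  refine ⟨fun x hx => ?_, fun i hi hle => ?_⟩
  · rcases mem_place.mp hx with hx | ⟨-, rfl⟩
    exacts [hv.1 x hx, Nat.succ_pos _]
  · rw [wmax_place_wmax_succ hG] at hle
    rcases hle.lt_or_eq with hlt | rfl
    · exact mem_place.mpr (.inl (hv.2 i hi (by omega)))
    · exact mem_place.mpr (.inr ⟨hG, rfl⟩)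

theorem IsPacked.filter_ne_wmax {w : List ℕ} (hw : IsPacked w) (hne : w ≠ []) :
    IsPacked (w.filter (· ≠ wmax w)) ∧ wmax (w.filter (· ≠ wmax w)) + 1 = wmax w := by
  have hm := hw.1 _ (wmax_mem hne)
  have hmem : ∀ i, 0 < i → i < wmax w → i ∈ w.filter (· ≠ wmax w) := fun i hi hlt =>
    List.mem_filter.mpr ⟨hw.2 i hi hlt.le, by simpa using hlt.ne⟩
  have hlt : ∀ x ∈ w.filter (· ≠ wmax w), x < wmax w := fun x hx => by
    obtain ⟨hx, hne⟩ := List.mem_filter.mp hx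
    exact lt_of_le_of_ne (le_wmax hx) (by simpa using hne)
  have hmax : wmax (w.filter (· ≠ wmax w)) + 1 = wmax w := by
    refine le_antisymm ?_ ?_
    · rcases eq_or_ne (w.filter (· ≠ wmax w)) [] with h | h
      · rw [h, wmax_nil]
        omega
      · exact hlt _ (wmax_mem h)
    · rcases Nat.lt_or_ge 1 (wmax w) with h | h
      · have := le_wmax (hmem (wmax w - 1) (by omega) (by omega))
        omega
      · omega
  exact ⟨⟨fun x hx => hw.1 x (List.mem_of_mem_filter hx), fun i hi _ => hmem i hi (by omega)⟩,
    hmax⟩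

theorem noGlobalDescent_place_append_iff {m : ℕ} {H A x : List ℕ} (hx : Irred x)
    (hAx : ∀ a ∈ A, ∀ b ∈ x, b < a) (hm : ∀ a ∈ A ++ x, a < m) (hH : H ≠ [])
    (hs : H.sum ≤ (A ++ x).length) :
    (∀ c, ¬ GlobalDescent (place m H (A ++ x)) c) ↔ A.length < H.sum := by
  constructor
  · intro h
    by_contra! hle
    -- every `m` is inserted within `A`, so cutting right before `x` is a global descent
    rw [place_append_of_sum_le m hle] at h
    refine h _ (globalDescent_append_length ?_ hx.2.1 fun a ha b hb => ?_)
    · exact List.ne_nil_of_length_pos (by rw [length_place]; simp [List.length_pos_iff, hH])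
    · rcases mem_place.mp ha with ha | ⟨-, rfl⟩
      exacts [hAx a ha b hb, hm b (List.mem_append_right _ hb)]
  · intro hlt c hc
    -- a global descent leaves every `m` on its left, so it cuts strictly inside `x`
    have h1 := hc.length_add_sum_le_of_place (fun a ha => (hm a ha).le) hs
    have h2 := hc.of_place hs h1 (by omega)
    exact hx.2.2 _ (h2.of_append_right (by omega))

/-! ### Packed trees in terms of gaps -/

def fromGaps (prev : ℕ) : List ℕ → List ℕ
  | [] => []
  | g :: G => (prev + g + 1) :: fromGaps (prev + g + 1) G

def toGaps (prev : ℕ) : List ℕ → List ℕ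
  | [] => []
  | i :: I => (i - prev - 1) :: toGaps i I

theorem toGaps_fromGaps (prev : ℕ) (G : List ℕ) : toGaps prev (fromGaps prev G) = G := by
  induction G generalizing prev with
  | nil => rfl
  | cons g G ih =>
    rw [fromGaps, toGaps, ih]
    congr 1
    omega

theorem fromGaps_toGaps {prev : ℕ} {I : List ℕ} (hs : I.Pairwise (· < ·))
    (hp : ∀ i ∈ I, prev < i) : fromGaps prev (toGaps prev I) = I := by
  induction I generalizing prev with
  | nil => rfl
  | cons i I ih =>
    obtain ⟨hi, hs⟩ := List.pairwise_cons.mp hs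
    rw [toGaps, fromGaps, show prev + (i - prev - 1) + 1 = i by
      have := hp i List.mem_cons_self; omega, ih hs hi]

theorem length_fromGaps (prev : ℕ) (G : List ℕ) : (fromGaps prev G).length = G.length := by
  induction G generalizing prev with
  | nil => rfl
  | cons g G ih => simp [fromGaps, ih]

theorem length_toGaps (prev : ℕ) (I : List ℕ) : (toGaps prev I).length = I.length := by
  induction I generalizing prev with
  | nil => rfl
  | cons i I ih => simp [toGaps, ih]

theorem lt_of_mem_fromGaps {prev i : ℕ} {G : List ℕ} (h : i ∈ fromGaps prev G) :
    prev < i := by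
  induction G generalizing prev with
  | nil => simp [fromGaps] at h
  | cons g G ih =>
    rcases List.mem_cons.mp h with rfl | h
    · omega
    · have := ih h; omega

theorem pairwise_fromGaps (prev : ℕ) (G : List ℕ) : (fromGaps prev G).Pairwise (· < ·) := by
  induction G generalizing prev with
  | nil => exact List.Pairwise.nil
  | cons g G ih => exact List.pairwise_cons.mpr ⟨fun _ => lt_of_mem_fromGaps, ih _⟩

theorem getLast?_getD_fromGaps (prev : ℕ) (G : List ℕ) :
    (fromGaps prev G).getLast?.getD prev = prev + G.length + G.sum := by
  induction G generalizing prev with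
  | nil => simp [fromGaps]
  | cons g G ih =>
    rw [fromGaps, List.getLast?_cons, Option.getD_some, ih]
    simp only [List.length_cons, List.sum_cons]
    omega

theorem getLastI_fromGaps (prev : ℕ) {G : List ℕ} (hG : G ≠ []) :
    (fromGaps prev G).getLastI = prev + G.length + G.sum := by
  obtain ⟨g, G, rfl⟩ := List.exists_cons_of_ne_nil hG
  rw [← getLast?_getD_fromGaps, List.getLastI_eq_getLast?_getD, fromGaps, List.getLast?_cons,
    Option.getD_some, Option.getD_some]

theorem fromGaps_of_sum_eq_zero {prev : ℕ} {G : List ℕ} (h : G.sum = 0) :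
    fromGaps prev G = List.range' (prev + 1) G.length := by
  induction G generalizing prev with
  | nil => rfl
  | cons g G ih =>
    simp only [List.sum_cons] at h
    rw [fromGaps, ih (by omega), List.length_cons, List.range'_succ, show g = 0 by omega]

theorem fromGaps_eq_range'_iff {prev : ℕ} {G : List ℕ} :
    fromGaps prev G = List.range' (prev + 1) G.length ↔ G.sum = 0 := by
  refine ⟨fun h => ?_, fromGaps_of_sum_eq_zero⟩
  have hzero : (List.replicate G.length 0).sum = 0 := by simp
  have hrange := fromGaps_of_sum_eq_zero (prev := prev) hzero
  rw [List.length_replicate] at hrange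
  rwa [← toGaps_fromGaps prev G, h, ← hrange, toGaps_fromGaps]

theorem forestWeight_nil : forestWeight [] = 0 := by rw [forestWeight]

theorem forestWeight_cons (t : LTree) (ts : List LTree) :
    forestWeight (t :: ts) = t.weight + forestWeight ts := by rw [forestWeight]

theorem forestWeight_append (ts ts' : List LTree) :
    forestWeight (ts ++ ts') = forestWeight ts + forestWeight ts' := by
  induction ts with
  | nil => simp [forestWeight_nil]
  | cons t ts ih => rw [List.cons_append, forestWeight_cons, forestWeight_cons, ih, add_assoc]

theorem IsPT.weight_pos {t : LTree} (h : IsPT t) : 0 < t.weight := by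
  cases h with
  | mk I fl fr hI =>
  rw [LTree.weight]
  have := List.length_pos_iff.mpr hI
  omega

theorem exists_split (ts : List LTree) (g : ℕ) : ∃ fl fr, ts = fl ++ fr ∧
    forestWeight fl ≤ g ∧ (fr ≠ [] → g < forestWeight fl + fr.headI.weight) := by
  induction ts generalizing g with
  | nil => exact ⟨[], [], rfl, by simp [forestWeight_nil], fun h => absurd rfl h⟩
  | cons t ts ih =>
    by_cases h : t.weight ≤ g
    · obtain ⟨fl, fr, rfl, hle, hlt⟩ := ih (g - t.weight)
      refine ⟨t :: fl, fr, rfl, ?_, fun hfr => ?_⟩ <;> rw [forestWeight_cons]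
      · omega
      · have := hlt hfr; omega
    · exact ⟨[], t :: ts, rfl, by simp [forestWeight_nil], fun _ => by
        simp only [forestWeight_nil, List.headI]; omega⟩

theorem split_unique {fl fr fl' fr' : List LTree} {g : ℕ} (h : fl ++ fr = fl' ++ fr')
    (hle : forestWeight fl ≤ g) (hlt : fr ≠ [] → g < forestWeight fl + fr.headI.weight)
    (hle' : forestWeight fl' ≤ g)
    (hlt' : fr' ≠ [] → g < forestWeight fl' + fr'.headI.weight) :
    fl = fl' := by
  induction fl generalizing fl' g with
  | nil =>
    cases fl' with
    | nil => rfl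
    | cons s fl' =>
      rw [List.nil_append] at h
      subst h
      have := hlt (List.cons_ne_nil _ _)
      rw [forestWeight_cons] at hle'
      simp only [forestWeight_nil, List.cons_append, List.headI] at this
      omega
  | cons s fl ih =>
    cases fl' with
    | nil =>
      rw [List.nil_append] at h
      subst h
      have := hlt' (List.cons_ne_nil _ _)
      rw [forestWeight_cons] at hle
      simp only [forestWeight_nil, List.cons_append, List.headI] at this
      omega
    | cons s' fl' =>
      simp only [List.cons_append, List.cons.injEq] at h
      obtain ⟨rfl, h⟩ := h
      rw [forestWeight_cons] at hle hle' hlt hlt'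
      rw [ih h (g := g - s.weight) (by omega) (fun hfr => by have := hlt hfr; omega) (by omega)
        (fun hfr => by have := hlt' hfr; omega)]

def LabelGaps (G : List ℕ) (fr : List LTree) : Prop :=
  G ≠ [] ∧ G.sum ≤ forestWeight fr ∧
    (fr ≠ [] → G.headI < fr.headI.weight ∧ forestWeight fr < G.sum + fr.getLastI.weight)

theorem rightWeight_add_one_sub_getLastI_fromGaps {G : List ℕ} (hG : G ≠ [])
    (fl fr : List LTree) :
    rightWeight (.node (fromGaps 0 G) fl fr) + 1 - (fromGaps 0 G).getLastI =
      forestWeight fr + 1 - G.sum := by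
  rw [rightWeight, length_fromGaps, getLastI_fromGaps 0 hG]
  omega

theorem isPT_node_fromGaps_iff {G : List ℕ} {fl fr : List LTree} :
    IsPT (.node (fromGaps 0 G) fl fr) ↔
      (∀ t ∈ fl, IsPT t) ∧ (∀ t ∈ fr, IsPT t) ∧ LabelGaps G fr := by
  rcases G with _ | ⟨g, T⟩
  · simp only [LabelGaps, ne_eq, not_true_eq_false, false_and, and_false, iff_false]
    intro h
    cases h with
    | mk _ _ _ hI => exact hI rfl
  have hhead : (fromGaps 0 (g :: T)).headI = g + 1 := by simp [fromGaps]
  have hright := rightWeight_add_one_sub_getLastI_fromGaps (List.cons_ne_nil g T) fl fr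
  have hrange : fromGaps 0 (g :: T) = List.range' 1 (fromGaps 0 (g :: T)).length ↔
      (g :: T).sum = 0 := by rw [length_fromGaps]; exact fromGaps_eq_range'_iff
  constructor
  · intro h
    cases h with
    | mk _ _ _ _ _ _ hnil hcons hfl hfr =>
    rw [hhead, hright] at hcons
    refine ⟨hfl, hfr, List.cons_ne_nil g T, ?_, fun hne => ?_⟩
    · rcases eq_or_ne fr [] with rfl | hne
      · rw [forestWeight_nil, hrange.mp (hnil rfl)]
      · have := hcons hne
        omega
    · have := hcons hne
      exact ⟨by change g < _; omega, by omega⟩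
  · rintro ⟨hfl, hfr, -, hsum, hcons⟩
    refine .mk _ _ _ (by simp [fromGaps]) (pairwise_fromGaps 0 _)
      (fun i hi => lt_of_mem_fromGaps hi) (fun h => hrange.mpr ?_) (fun hne => ?_) hfl hfr
    · subst h
      rw [forestWeight_nil] at hsum
      omega
    · have : g < _ ∧ _ := hcons hne
      rw [hhead, hright]
      omega

theorem IsPT.exists_fromGaps {I : List ℕ} {fl fr : List LTree} (h : IsPT (.node I fl fr)) :
    ∃ G, I = fromGaps 0 G := by
  cases h with
  | mk _ _ _ _ hs hp =>
  exact ⟨toGaps 0 I, (fromGaps_toGaps hs hp).symm⟩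

theorem List.getLastI_eq_getLast {α : Type*} [Inhabited α] {l : List α} (h : l ≠ []) :
    l.getLastI = l.getLast h := by
  rw [List.getLastI_eq_getLast?_getD, List.getLast?_eq_some_getLast h, Option.getD_some]

theorem sum_modifyHead_add {G : List ℕ} (hG : G ≠ []) (k : ℕ) :
    (G.modifyHead (· + k)).sum = G.sum + k := by
  obtain ⟨g, G, rfl⟩ := List.exists_cons_of_ne_nil hG
  simp only [List.modifyHead_cons, List.sum_cons]
  omega

/-- Gaps with which inserting a new maximal letter into the word of `ts` gives the word of a
packed tree. -/
def InsertionGaps (H : List ℕ) (ts : List LTree) : Prop :=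
  H ≠ [] ∧ H.sum ≤ forestWeight ts ∧
    (ts ≠ [] → forestWeight ts < H.sum + ts.getLastI.weight)

theorem LabelGaps.insertionGaps {G : List ℕ} {fl fr : List LTree} (h : LabelGaps G fr)
    (hfl : ∀ t ∈ fl, 0 < t.weight) :
    InsertionGaps (G.modifyHead (· + forestWeight fl)) (fl ++ fr) := by
  obtain ⟨hG, hsum, hcons⟩ := h
  have hHsum := sum_modifyHead_add hG (forestWeight fl)
  refine ⟨by simpa using hG, by rw [hHsum, forestWeight_append]; omega, fun hne => ?_⟩
  rw [hHsum, forestWeight_append]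
  rcases eq_or_ne fr [] with rfl | hfr
  · rw [List.append_nil] at hne ⊢
    rw [forestWeight_nil] at hsum ⊢
    have := hfl _ (List.getLastI_eq_getLast hne ▸ List.getLast_mem hne)
    omega
  · rw [List.getLastI_eq_getLast hne, List.getLast_append_of_ne_nil _ hfr]
    have := (hcons hfr).2
    rw [List.getLastI_eq_getLast hfr] at this
    omega

theorem InsertionGaps.exists_labelGaps {H : List ℕ} {ts : List LTree} (h : InsertionGaps H ts) :
    ∃ fl fr G, ts = fl ++ fr ∧ H = G.modifyHead (· + forestWeight fl) ∧ LabelGaps G fr := by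
  obtain ⟨hH, hsum, hlast⟩ := h
  obtain ⟨g, T, rfl⟩ := List.exists_cons_of_ne_nil hH
  obtain ⟨fl, fr, rfl, hle, hlt⟩ := exists_split ts g
  rw [forestWeight_append] at hsum hlast
  simp only [List.sum_cons] at hsum hlast
  refine ⟨fl, fr, (g - forestWeight fl) :: T, rfl,
    by simp only [List.modifyHead_cons, List.cons.injEq, and_true]; omega, List.cons_ne_nil _ _,
    by simp only [List.sum_cons]; omega,
    fun hfr => ⟨by have := hlt hfr; change _ - _ < _; omega, ?_⟩⟩
  have := hlast (by simp [hfr])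
  rw [List.getLastI_eq_getLast hfr]
  rw [List.getLastI_eq_getLast (by simp [hfr]), List.getLast_append_of_ne_nil _ hfr] at this
  simp only [List.sum_cons]
  omega

theorem LabelGaps.unique {G G' : List ℕ} {fl fr fl' fr' : List LTree} (h : LabelGaps G fr)
    (h' : LabelGaps G' fr') (hts : fl ++ fr = fl' ++ fr')
    (hH : G.modifyHead (· + forestWeight fl) = G'.modifyHead (· + forestWeight fl')) :
    fl = fl' ∧ G = G' := by
  obtain ⟨hG, -, hcons⟩ := h
  obtain ⟨hG', -, hcons'⟩ := h'
  obtain ⟨g, T, rfl⟩ := List.exists_cons_of_ne_nil hG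
  obtain ⟨g', T', rfl⟩ := List.exists_cons_of_ne_nil hG'
  simp only [List.modifyHead_cons, List.cons.injEq] at hH
  obtain ⟨hg, rfl⟩ := hH
  obtain rfl : fl = fl' := split_unique hts (g := g + forestWeight fl) (by omega)
    (fun hfr => by have : g < _ := (hcons hfr).1; omega) (by omega)
    (fun hfr => by have : g' < _ := (hcons' hfr).1; omega)
  exact ⟨rfl, by simp only [List.cons.injEq, and_true]; omega⟩

/-! ### The word of a packed tree -/

mutual
/-- The word of a node: a new maximal letter is inserted into the skew sum of the words of its
two forests so that, within the part coming from the right forest, it occupies the positions `I`. -/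
def wordT : LTree → List ℕ
  | .node I fl fr =>
    place (wmax (skew (wordF fl) (wordF fr)) + 1) ((toGaps 0 I).modifyHead (· + forestWeight fl))
      (skew (wordF fl) (wordF fr))
def wordF : List LTree → List ℕ
  | [] => []
  | t :: ts => skew (wordT t) (wordF ts)
end

mutual
theorem length_wordT : ∀ t : LTree, (wordT t).length = t.weight
  | .node I fl fr => by
    rw [wordT, LTree.weight, length_place, length_skew, length_wordF fl, length_wordF fr,
      List.length_modifyHead, length_toGaps]
    omega
theorem length_wordF : ∀ ts : List LTree, (wordF ts).length = forestWeight ts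
  | [] => by rw [wordF, forestWeight_nil, List.length_nil]
  | t :: ts => by rw [wordF, forestWeight_cons, length_skew, length_wordT t, length_wordF ts]
end

theorem wordF_append (ts ts' : List LTree) : wordF (ts ++ ts') = skew (wordF ts) (wordF ts') := by
  induction ts with
  | nil => rw [List.nil_append, wordF, skew_nil_left]
  | cons t ts ih => rw [List.cons_append, wordF, wordF, ih, skew_assoc]

theorem wordT_node (I : List ℕ) (fl fr : List LTree) :
    wordT (.node I fl fr) = place (wmax (wordF (fl ++ fr)) + 1)
      ((toGaps 0 I).modifyHead (· + forestWeight fl)) (wordF (fl ++ fr)) := by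
  rw [wordT, wordF_append]

theorem wordF_eq_skew_getLastI {ts : List LTree} (h : ts ≠ []) :
    wordF ts = skew (wordF ts.dropLast) (wordT ts.getLastI) := by
  conv_lhs => rw [← List.dropLast_append_getLast h]
  rw [wordF_append, List.getLastI_eq_getLast h, wordF, wordF, skew_nil_right]

theorem isPacked_wordF {ts : List LTree} (h : ∀ t ∈ ts, IsPacked (wordT t)) :
    IsPacked (wordF ts) := by
  induction ts with
  | nil => exact isPacked_nil
  | cons t ts ih =>
    rw [wordF]
    exact isPacked_skew (h t List.mem_cons_self) (ih fun s hs => h s (List.mem_cons_of_mem _ hs))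

/-- Irreducibility of the word of a node amounts to the last inserted letter falling after the
first letter of the word of the last tree. -/
theorem noGlobalDescent_place_wordF_iff {H : List ℕ} {ts : List LTree}
    (hts : ∀ t ∈ ts, Irred (wordT t)) (hH : H ≠ []) (hs : H.sum ≤ forestWeight ts) :
    (∀ c, ¬ GlobalDescent (place (wmax (wordF ts) + 1) H (wordF ts)) c) ↔
      (ts ≠ [] → forestWeight ts < H.sum + ts.getLastI.weight) := by
  rw [← length_wordF] at hs
  rcases eq_or_ne ts [] with rfl | hne
  · refine iff_of_true (fun c hc => ?_) (fun h => absurd rfl h)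
    have h1 := hc.length_add_sum_le_of_place (by simp [wordF]) hs
    have h2 := hc.2.1
    rw [length_place] at h2
    simp only [wordF, List.length_nil] at hs h2
    omega
  have hlast : Irred (wordT ts.getLastI) :=
    hts _ (List.getLastI_eq_getLast hne ▸ List.getLast_mem hne)
  have hpos := (isPacked_wordF fun t ht => (hts t (List.mem_of_mem_dropLast ht)).1 :
    IsPacked (wordF ts.dropLast)).1
  have hlen := congrArg List.length (wordF_eq_skew_getLastI hne)
  rw [wordF_eq_skew_getLastI hne, skew] at hs ⊢
  rw [noGlobalDescent_place_append_iff hlast (lt_of_mem_skew hpos)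
    (fun a ha => Nat.lt_succ_of_le (le_wmax ha)) hH hs]
  rw [length_wordF, length_skew, length_wordT] at hlen
  simp only [List.length_map, ne_eq, hne, not_false_eq_true, forall_const]
  omega

theorem irred_wordT {t : LTree} (ht : IsPT t) : Irred (wordT t) := by
  induction ht with
  | mk I fl fr hne hsort hpos hnil hcons hfl hfr ihl ihr =>
  obtain ⟨G, rfl⟩ := IsPT.exists_fromGaps (.mk I fl fr hne hsort hpos hnil hcons hfl hfr)
  obtain ⟨-, -, hG⟩ :=
    isPT_node_fromGaps_iff.mp (.mk _ fl fr hne hsort hpos hnil hcons hfl hfr)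
  obtain ⟨hH, hs, hlast⟩ := hG.insertionGaps fun t ht => (hfl t ht).weight_pos
  have hts : ∀ t ∈ fl ++ fr, Irred (wordT t) := fun t ht =>
    (List.mem_append.mp ht).elim (ihl t) (ihr t)
  rw [wordT_node, toGaps_fromGaps]
  refine ⟨(isPacked_wordF fun t ht => (hts t ht).1).place_wmax_succ hH, ?_,
    (noGlobalDescent_place_wordF_iff hts hH hs).mpr hlast⟩
  have := List.length_pos_iff.mpr hH
  exact List.ne_nil_of_length_pos (by rw [length_place]; omega)

theorem wordF_injective {ts ts' : List LTree}
    (hts : ∀ t ∈ ts, IsPT t ∧ ∀ t', IsPT t' → wordT t = wordT t' → t = t')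
    (hts' : ∀ t ∈ ts', IsPT t) (h : wordF ts = wordF ts') : ts = ts' := by
  induction ts generalizing ts' with
  | nil =>
    cases ts' with
    | nil => rfl
    | cons t' ts' =>
      have := congrArg List.length h
      rw [length_wordF, length_wordF, forestWeight_nil, forestWeight_cons] at this
      exact absurd this (by have := (hts' t' List.mem_cons_self).weight_pos; omega)
  | cons t ts ih =>
    cases ts' with
    | nil =>
      have := congrArg List.length h
      rw [length_wordF, length_wordF, forestWeight_nil, forestWeight_cons] at this
      exact absurd this (by have := (hts t List.mem_cons_self).1.weight_pos; omega)
    | cons t' ts' =>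
      obtain ⟨ht, hinj⟩ := hts t List.mem_cons_self
      obtain ⟨h1, h2⟩ := skew_inj (irred_wordT ht) (irred_wordT (hts' t' List.mem_cons_self)) h
      rw [hinj t' (hts' t' List.mem_cons_self) h1,
        ih (fun s hs => hts s (List.mem_cons_of_mem _ hs))
          (fun s hs => hts' s (List.mem_cons_of_mem _ hs)) h2]

theorem IsPT.wordT_injective {t t' : LTree} (ht : IsPT t) (ht' : IsPT t')
    (h : wordT t = wordT t') : t = t' := by
  induction ht generalizing t' with
  | mk I fl fr hne hsort hpos hnil hcons hfl hfr ihl ihr =>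
  have hpt : IsPT (.node I fl fr) := .mk I fl fr hne hsort hpos hnil hcons hfl hfr
  obtain ⟨I', fl', fr'⟩ := t'
  obtain ⟨G, rfl⟩ := hpt.exists_fromGaps
  obtain ⟨G', rfl⟩ := ht'.exists_fromGaps
  obtain ⟨-, -, hG⟩ := isPT_node_fromGaps_iff.mp hpt
  obtain ⟨hfl', hfr', hG'⟩ := isPT_node_fromGaps_iff.mp ht'
  obtain ⟨hH, hs, -⟩ := hG.insertionGaps fun t ht => (hfl t ht).weight_pos
  obtain ⟨hH', hs', -⟩ := hG'.insertionGaps fun t ht => (hfl' t ht).weight_pos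
  rw [← length_wordF (fl ++ fr)] at hs
  rw [← length_wordF (fl' ++ fr')] at hs'
  rw [wordT_node, wordT_node, toGaps_fromGaps, toGaps_fromGaps] at h
  have hm : wmax (wordF (fl ++ fr)) + 1 = wmax (wordF (fl' ++ fr')) + 1 := by
    rw [← wmax_place_wmax_succ hH, h, wmax_place_wmax_succ hH']
  rw [hm] at h
  have hnotin : ∀ W : List ℕ, wmax W + 1 ∉ W := fun W hW => by have := le_wmax hW; omega
  obtain ⟨hHH, hW⟩ := place_inj (hm ▸ hnotin _) (hnotin _) hs hs' h
  have hts : fl ++ fr = fl' ++ fr' := by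
    refine wordF_injective (fun t ht => ?_) (fun t ht => ?_) hW
    · rcases List.mem_append.mp ht with ht | ht
      exacts [⟨hfl t ht, fun _ => ihl t ht⟩, ⟨hfr t ht, fun _ => ihr t ht⟩]
    · rcases List.mem_append.mp ht with ht | ht
      exacts [hfl' t ht, hfr' t ht]
  obtain ⟨rfl, rfl⟩ := hG.unique hG' hts hHH
  rw [List.append_cancel_left hts]

theorem exists_wordF_eq {n : ℕ}
    (hT : ∀ w, Irred w → w.length ≤ n → ∃ t, IsPT t ∧ wordT t = w)
    {x : List ℕ} (hx : IsPacked x) (hlen : x.length ≤ n) :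
    ∃ ts, (∀ t ∈ ts, IsPT t) ∧ wordF ts = x := by
  induction h : x.length using Nat.strong_induction_on generalizing x with
  | _ k ih =>
  rcases eq_or_ne x [] with rfl | hne
  · exact ⟨[], fun _ h => absurd h List.not_mem_nil, rfl⟩
  obtain ⟨a, b, ha, hb, rfl⟩ := hx.exists_irred_skew hne
  have hlen' := length_skew a b
  have hapos := List.length_pos_iff.mpr ha.2.1
  obtain ⟨t, ht, rfl⟩ := hT a ha (by omega)
  obtain ⟨ts, hts, rfl⟩ := ih b.length (by omega) hb (by omega) rfl
  exact ⟨t :: ts, fun s hs => (List.mem_cons.mp hs).elim (· ▸ ht) (hts s), rfl⟩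

theorem exists_wordT_eq {w : List ℕ} (hw : Irred w) : ∃ t, IsPT t ∧ wordT t = w := by
  induction h : w.length using Nat.strong_induction_on generalizing w with
  | _ n ih =>
  have hplace := place_mgaps (wmax w) w
  obtain ⟨hWpack, hWmax⟩ := hw.1.filter_ne_wmax hw.2.1
  have hH : mgaps (wmax w) w ≠ [] := fun hH => by
    rw [hH, place] at hplace
    have hmem : wmax w ∈ w.filter (· ≠ wmax w) := by
      rw [hplace]
      exact wmax_mem hw.2.1
    simp at hmem
  have hWlen : (w.filter (· ≠ wmax w)).length < n := by
    have := List.length_pos_iff.mpr hH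
    have hlen := congrArg List.length hplace
    rw [length_place] at hlen
    omega
  obtain ⟨ts, hts, hW⟩ := exists_wordF_eq (fun u hu hlen => ih u.length (by omega) hu rfl)
    hWpack le_rfl
  have hs : (mgaps (wmax w) w).sum ≤ forestWeight ts := by
    rw [← length_wordF, hW]
    exact sum_mgaps_le _ w
  have hlast := (noGlobalDescent_place_wordF_iff (fun t ht => irred_wordT (hts t ht)) hH hs).mp
    (by rw [hW, hWmax, hplace]; exact hw.2.2)
  obtain ⟨fl, fr, G, rfl, hHG, hG⟩ := InsertionGaps.exists_labelGaps ⟨hH, hs, hlast⟩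
  refine ⟨.node (fromGaps 0 G) fl fr, isPT_node_fromGaps_iff.mpr
    ⟨fun t ht => hts t (List.mem_append_left _ ht),
      fun t ht => hts t (List.mem_append_right _ ht), hG⟩, ?_⟩
  rw [wordT_node, toGaps_fromGaps, ← hHG, hW, hWmax, hplace]

theorem card_irreducible_eq_card_packedTrees (n : ℕ) (hn : 1 ≤ n) :
    Nat.card {w : List ℕ // Irred w ∧ w.length = n} =
      Nat.card {t : LTree // IsPT t ∧ t.weight = n} := by
  let word (t : {t : LTree // IsPT t ∧ t.weight = n}) :
      {w : List ℕ // Irred w ∧ w.length = n} :=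
    ⟨wordT t.1, irred_wordT t.2.1, (length_wordT t.1).trans t.2.2⟩
  refine (Nat.card_congr (Equiv.ofBijective word ⟨?_, ?_⟩)).symm
  · rintro ⟨t, ht, _⟩ ⟨t', ht', _⟩ h
    exact Subtype.ext (ht.wordT_injective ht' (congrArg Subtype.val h))
  · rintro ⟨w, hw, rfl⟩
    obtain ⟨t, ht, rfl⟩ := exists_wordT_eq hw
    exact ⟨⟨t, ht, (length_wordT t).symm⟩, rfl⟩
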